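/- Let $n \ge k \ge 2$, let $Y_1, \ldots, Y_n$ be i.i.d. random variables with $\mathbb{P}(Y_i = 1) = p = 1 - \mathbb{P}(Y_i = 0)$, where $0 < p < 1$, for each $k$-element subset $S \subseteq \{1, \ldots, n\}$ let $Z_S = \prod_{i \in S} Y_i$, and let $Z = \sum_S Z_S$ be the corresponding U-statistic. Then for every $t > 0$, $\mathbb{P}(Z = 0) \le (1 - p^k)^{\binom{n}{k}} \Big(1 + e^{-t}\frac{p^k}{1 - p^k}\Big)^{\binom{n}{k}} + \frac{t^2}{2}\binom{n}{k} \sum_{m=1}^{k-1} \binom{k}{m}\binom{n-k}{k-m}\big(p^{2k-m} - p^{2k}\big)$. -/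

import Mathlib

open MeasureTheory ProbabilityTheory Finset

/-- Covariance of two real-valued random variables. -/
noncomputable def cov {Ω : Type*} [MeasurableSpace Ω] (μ : Measure Ω) (X Y : Ω → ℝ) : ℝ :=
  (∫ ω, X ω * Y ω ∂μ) - (∫ ω, X ω ∂μ) * (∫ ω, Y ω ∂μ)

/-- A finite family of real random variables is positively associated if every pair of
bounded measurable coordinatewise-nondecreasing functionals of the family has
nonnegative covariance. -/
def PosAssoc {Ω : Type*} [MeasurableSpace Ω] (μ : Measure Ω) {I : Type*} [Fintype I]
    (X : I → Ω → ℝ) : Prop :=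
  ∀ f g : (I → ℝ) → ℝ, Measurable f → Measurable g →
    (∃ C, ∀ x, |f x| ≤ C) → (∃ C, ∀ x, |g x| ≤ C) →
    Monotone f → Monotone g →
    0 ≤ cov μ (fun ω => f (fun i => X i ω)) (fun ω => g (fun i => X i ω))


section helperlemmas
variable {Ω : Type*} [MeasurableSpace Ω] (μ : Measure Ω) [IsProbabilityMeasure μ]

lemma bdd_int' {f : Ω → ℝ} (hf : Measurable f) {C : ℝ} (h : ∀ ω, |f ω| ≤ C) :
    Integrable f μ :=
  (integrable_const C).mono' hf.aestronglyMeasurable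
    (ae_of_all _ (by simpa [Real.norm_eq_abs] using h))

lemma cov_one_sub' {X V : Ω → ℝ} (hX : Measurable X) (hV : Measurable V)
    {CX CV : ℝ} (hbX : ∀ ω, |X ω| ≤ CX) (hbV : ∀ ω, |V ω| ≤ CV) (b : ℝ) :
    cov μ X (fun ω => 1 - b * V ω) = -b * cov μ X V := by
  have hXi : Integrable X μ := bdd_int' μ hX hbX
  have hVi : Integrable V μ := bdd_int' μ hV hbV
  have hXVi : Integrable (fun ω => X ω * V ω) μ := by
    refine bdd_int' μ (hX.mul hV) (C := CX * CV) fun ω => ?_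
    rw [abs_mul]
    exact mul_le_mul (hbX ω) (hbV ω) (abs_nonneg _) ((abs_nonneg _).trans (hbX ω))
  unfold cov
  have h1 : (∫ ω, X ω * (1 - b * V ω) ∂μ) = (∫ ω, X ω ∂μ) - b * ∫ ω, X ω * V ω ∂μ := by
    have : (fun ω => X ω * (1 - b * V ω)) = fun ω => X ω - b * (X ω * V ω) := by
      funext ω; ring
    rw [this, integral_sub hXi (hXVi.const_mul b), MeasureTheory.integral_const_mul]
  have h2 : (∫ ω, (1 - b * V ω) ∂μ) = 1 - b * ∫ ω, V ω ∂μ := by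
    rw [integral_sub (integrable_const 1) (hVi.const_mul b), MeasureTheory.integral_const_mul,
      integral_const]
    simp
  rw [h1, h2]; ring

omit [IsProbabilityMeasure μ] in
lemma cov_symm' (X V : Ω → ℝ) : cov μ X V = cov μ V X := by
  unfold cov; simp [mul_comm]

lemma prod_sub_prod_le {ι : Type*} [DecidableEq ι] (s : Finset ι) (a b : ι → ℝ)
    (h0 : ∀ i ∈ s, 0 ≤ b i) (hba : ∀ i ∈ s, b i ≤ a i) (h1 : ∀ i ∈ s, a i ≤ 1) :
    ∏ i ∈ s, a i - ∏ i ∈ s, b i ≤ ∑ i ∈ s, (a i - b i) := by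
  induction s using Finset.induction_on with
  | empty => simp
  | insert j s hj ih =>
    have h0' : ∀ i ∈ s, 0 ≤ b i := fun i hi => h0 i (mem_insert_of_mem hi)
    have hba' : ∀ i ∈ s, b i ≤ a i := fun i hi => hba i (mem_insert_of_mem hi)
    have h1' : ∀ i ∈ s, a i ≤ 1 := fun i hi => h1 i (mem_insert_of_mem hi)
    have hbj0 : 0 ≤ b j := h0 j (mem_insert_self _ _)
    have haj1 : a j ≤ 1 := h1 j (mem_insert_self _ _)
    have hbaj : b j ≤ a j := hba j (mem_insert_self _ _)
    have hpb0 : 0 ≤ ∏ i ∈ s, b i := Finset.prod_nonneg h0'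
    have hpb1 : ∏ i ∈ s, b i ≤ 1 :=
      Finset.prod_le_one h0' fun i hi => (hba' i hi).trans (h1' i hi)
    have hple : ∏ i ∈ s, b i ≤ ∏ i ∈ s, a i := Finset.prod_le_prod h0' hba'
    rw [Finset.prod_insert hj, Finset.prod_insert hj, Finset.sum_insert hj]
    have key : a j * ∏ i ∈ s, a i - b j * ∏ i ∈ s, b i
        = a j * (∏ i ∈ s, a i - ∏ i ∈ s, b i) + (a j - b j) * ∏ i ∈ s, b i := by ring
    rw [key]
    have t1 : a j * (∏ i ∈ s, a i - ∏ i ∈ s, b i) ≤ ∑ i ∈ s, (a i - b i) := by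
      calc a j * (∏ i ∈ s, a i - ∏ i ∈ s, b i) ≤ 1 * (∏ i ∈ s, a i - ∏ i ∈ s, b i) :=
            mul_le_mul_of_nonneg_right haj1 (by linarith)
        _ = ∏ i ∈ s, a i - ∏ i ∈ s, b i := one_mul _
        _ ≤ _ := ih h0' hba' h1'
    have t2 : (a j - b j) * ∏ i ∈ s, b i ≤ a j - b j := by
      calc (a j - b j) * ∏ i ∈ s, b i ≤ (a j - b j) * 1 :=
            mul_le_mul_of_nonneg_left hpb1 (by linarith)
        _ = a j - b j := mul_one _
    linarith

lemma telescope' {ι : Type*} [LinearOrder ι]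
    (g : ι → Ω → ℝ) (hg : ∀ j, Measurable (g j))
    (h0 : ∀ j ω, 0 ≤ g j ω) (h1 : ∀ j ω, g j ω ≤ 1)
    (C : ι → ℝ) (hC0 : ∀ j, 0 ≤ C j)
    (hcov : ∀ (j : ι) (A : Finset ι), (∀ i ∈ A, i < j) →
      cov μ (fun ω => ∏ i ∈ A, g i ω) (g j) ≤ C j)
    (s : Finset ι) :
    ∫ ω, ∏ i ∈ s, g i ω ∂μ ≤ ∏ i ∈ s, (∫ ω, g i ω ∂μ) + ∑ i ∈ s, C i := by
  classical
  induction s using Finset.induction_on_max with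
  | empty => simp
  | insert a s hmax ih =>
    have has : a ∉ s := fun h => lt_irrefl a (hmax a h)
    have hPmeas : Measurable (fun ω => ∏ i ∈ s, g i ω) :=
      Finset.measurable_prod s (fun i _ => hg i)
    have hP0 : ∀ ω, (0:ℝ) ≤ ∏ i ∈ s, g i ω := fun ω =>
      Finset.prod_nonneg fun i _ => h0 i ω
    have hP1 : ∀ ω, ∏ i ∈ s, g i ω ≤ 1 := fun ω =>
      Finset.prod_le_one (fun i _ => h0 i ω) (fun i _ => h1 i ω)
    have hPb : ∀ ω, |∏ i ∈ s, g i ω| ≤ 1 := fun ω =>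
      abs_le.2 ⟨by linarith [hP0 ω], hP1 ω⟩
    have hgb : ∀ j, ∀ ω, |g j ω| ≤ 1 := fun j ω =>
      abs_le.2 ⟨by linarith [h0 j ω], h1 j ω⟩
    have hPi : Integrable (fun ω => ∏ i ∈ s, g i ω) μ := bdd_int' μ hPmeas hPb
    have hgi : Integrable (g a) μ := bdd_int' μ (hg a) (hgb a)
    have hIg0 : 0 ≤ ∫ ω, g a ω ∂μ := integral_nonneg fun ω => h0 a ω
    have hIg1 : ∫ ω, g a ω ∂μ ≤ 1 := by
      calc ∫ ω, g a ω ∂μ ≤ ∫ _ω, (1:ℝ) ∂μ := integral_mono hgi (integrable_const 1)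
            fun ω => h1 a ω
        _ = 1 := by simp
    have hkey : ∫ ω, ∏ i ∈ insert a s, g i ω ∂μ
        = cov μ (fun ω => ∏ i ∈ s, g i ω) (g a)
          + (∫ ω, ∏ i ∈ s, g i ω ∂μ) * ∫ ω, g a ω ∂μ := by
      unfold cov
      have : ∀ ω, ∏ i ∈ insert a s, g i ω = (∏ i ∈ s, g i ω) * g a ω := fun ω => by
        rw [Finset.prod_insert has]; ring
      simp only [this]; ring
    rw [hkey, Finset.prod_insert has, Finset.sum_insert has]
    have h2 : cov μ (fun ω => ∏ i ∈ s, g i ω) (g a) ≤ C a := hcov a s hmax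
    have hsC : 0 ≤ ∑ i ∈ s, C i := Finset.sum_nonneg fun i _ => hC0 i
    have h3 : (∫ ω, ∏ i ∈ s, g i ω ∂μ) * ∫ ω, g a ω ∂μ
        ≤ (∏ i ∈ s, (∫ ω, g i ω ∂μ) + ∑ i ∈ s, C i) * ∫ ω, g a ω ∂μ :=
      mul_le_mul_of_nonneg_right ih hIg0
    have h4 : (∏ i ∈ s, (∫ ω, g i ω ∂μ) + ∑ i ∈ s, C i) * ∫ ω, g a ω ∂μ
        = (∏ i ∈ s, (∫ ω, g i ω ∂μ)) * ∫ ω, g a ω ∂μ + (∑ i ∈ s, C i) * ∫ ω, g a ω ∂μ := by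
      ring
    have h5 : (∑ i ∈ s, C i) * ∫ ω, g a ω ∂μ ≤ ∑ i ∈ s, C i :=
      mul_le_of_le_one_right hsC hIg1
    have : (∫ ω, g a ω ∂μ) * ∏ i ∈ s, (∫ ω, g i ω ∂μ)
        = (∏ i ∈ s, (∫ ω, g i ω ∂μ)) * ∫ ω, g a ω ∂μ := by ring
    linarith [h3, h5]

omit [IsProbabilityMeasure μ] in
lemma half_sum' {ι : Type*} [Fintype ι] [LinearOrder ι] (w : ι → ι → ℝ)
    (hsym : ∀ i j, w i j = w j i) :
    2 * ∑ j, ∑ i ∈ Finset.univ.filter (· < j), w i j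
      = ∑ j, ∑ i ∈ Finset.univ.erase j, w i j := by
  classical
  have split : ∀ j : ι, ∑ i ∈ Finset.univ.erase j, w i j
      = ∑ i ∈ Finset.univ.filter (· < j), w i j
        + ∑ i ∈ Finset.univ.filter (fun i => j < i), w i j := by
    intro j
    have e1 : (Finset.univ.erase j).filter (· < j) = Finset.univ.filter (· < j) := by
      ext i; simp only [mem_filter, mem_erase, mem_univ, true_and, and_true]
      constructor
      · rintro ⟨_, h⟩; exact h
      · intro h; exact ⟨ne_of_lt h, h⟩
    have e2 : (Finset.univ.erase j).filter (fun i => ¬ i < j)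
        = Finset.univ.filter (fun i => j < i) := by
      ext i; simp only [mem_filter, mem_erase, mem_univ, true_and, and_true]
      constructor
      · rintro ⟨hne, h⟩; exact lt_of_le_of_ne (not_lt.1 h) (Ne.symm hne)
      · intro h; exact ⟨(ne_of_lt h).symm, not_lt.2 h.le⟩
    rw [← Finset.sum_filter_add_sum_filter_not (Finset.univ.erase j) (· < j), e1, e2]
  have swap : ∑ j, ∑ i ∈ Finset.univ.filter (fun i => j < i), w i j
      = ∑ j, ∑ i ∈ Finset.univ.filter (· < j), w i j := by
    simp only [Finset.sum_filter]
    rw [Finset.sum_comm]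
    refine Finset.sum_congr rfl fun j _ => Finset.sum_congr rfl fun i _ => ?_
    rw [hsym]
  calc 2 * ∑ j, ∑ i ∈ Finset.univ.filter (· < j), w i j
      = ∑ j, ∑ i ∈ Finset.univ.filter (· < j), w i j
        + ∑ j, ∑ i ∈ Finset.univ.filter (fun i => j < i), w i j := by rw [swap]; ring
    _ = ∑ j, ∑ i ∈ Finset.univ.erase j, w i j := by
        rw [← Finset.sum_add_distrib]
        exact Finset.sum_congr rfl fun j _ => (split j).symm
end helperlemmas

section facts
variable {Ω : Type*} [MeasurableSpace Ω] (μ : Measure Ω) [IsProbabilityMeasure μ]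
  {n : ℕ} {p : ℝ} {Y : Fin n → Ω → ℝ}
  (hmeas : ∀ i, Measurable (Y i))
  (h01 : ∀ i ω, Y i ω = 0 ∨ Y i ω = 1)
  (hindep : iIndepFun Y μ)
  (hid : ∀ i, μ {ω | Y i ω = 1} = ENNReal.ofReal p)

include hmeas h01 hid in
set_option linter.unusedSectionVars false in
lemma EY (hp0 : 0 ≤ p) (i : Fin n) : ∫ ω, Y i ω ∂μ = p := by
  have hAm : MeasurableSet {ω | Y i ω = 1} := hmeas i (measurableSet_singleton 1)
  have heq : Y i = Set.indicator {ω | Y i ω = 1} (fun _ => (1:ℝ)) := by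
    funext ω
    rcases h01 i ω with h | h
    · rw [h, Set.indicator_apply]
      simp only [Set.mem_setOf_eq, h]
      norm_num
    · rw [h, Set.indicator_apply]
      simp only [Set.mem_setOf_eq, h, if_true]
  rw [heq, integral_indicator_const (1:ℝ) hAm, measureReal_def, hid i, smul_eq_mul, mul_one,
    ENNReal.toReal_ofReal hp0]

include hmeas hindep h01 hid in
lemma EP' (hp0 : 0 ≤ p) (T : Finset (Fin n)) :
    ∫ ω, ∏ l ∈ T, Y l ω ∂μ = p ^ T.card := by
  classical
  induction T using Finset.induction_on with
  | empty => simp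
  | insert a T ha ih =>
    have hind : IndepFun (∏ j ∈ T, Y j) (Y a) μ :=
      hindep.indepFun_finset_prod_of_notMem hmeas ha
    have hPm : Measurable (∏ j ∈ T, Y j) := by
      have : (∏ j ∈ T, Y j) = fun ω => ∏ j ∈ T, Y j ω := by
        funext ω; exact Finset.prod_apply ω T Y
      rw [this]; exact Finset.measurable_prod T fun i _ => hmeas i
    have h1 : ∫ ω, ∏ l ∈ insert a T, Y l ω ∂μ = ∫ ω, ((∏ j ∈ T, Y j) * Y a) ω ∂μ := by
      congr 1; funext ω
      rw [Finset.prod_insert ha, Pi.mul_apply, Finset.prod_apply]; ring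
    rw [h1, hind.integral_mul_eq_mul_integral hPm.aestronglyMeasurable (hmeas a).aestronglyMeasurable]
    have h2 : ∫ ω, (∏ j ∈ T, Y j) ω ∂μ = p ^ T.card := by
      rw [show (∏ j ∈ T, Y j) = fun ω => ∏ j ∈ T, Y j ω from funext fun ω =>
        Finset.prod_apply ω T Y]
      exact ih
    rw [h2, EY μ hmeas h01 hid hp0 a, Finset.card_insert_of_notMem ha, pow_succ]

include h01 in
set_option linter.unusedSectionVars false in
lemma PP (T₁ T₂ : Finset (Fin n)) (ω : Ω) :
    (∏ l ∈ T₁, Y l ω) * (∏ l ∈ T₂, Y l ω) = ∏ l ∈ T₁ ∪ T₂, Y l ω := by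
  classical
  by_cases hall : ∀ l ∈ T₁ ∪ T₂, Y l ω = 1
  · rw [Finset.prod_eq_one hall,
      Finset.prod_eq_one (fun l hl => hall l (Finset.mem_union_left _ hl)),
      Finset.prod_eq_one (fun l hl => hall l (Finset.mem_union_right _ hl))]
    norm_num
  · push_neg at hall
    obtain ⟨l, hl, hne⟩ := hall
    have hl0 : Y l ω = 0 := (h01 l ω).resolve_right hne
    rw [Finset.prod_eq_zero hl hl0]
    rcases Finset.mem_union.1 hl with h | h
    · rw [Finset.prod_eq_zero h hl0]; ring
    · rw [Finset.prod_eq_zero h hl0]; ring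

include hmeas h01 hindep hid in
lemma covP' (hp0 : 0 ≤ p) (T₁ T₂ : Finset (Fin n)) :
    cov μ (fun ω => ∏ l ∈ T₁, Y l ω) (fun ω => ∏ l ∈ T₂, Y l ω)
      = p ^ (T₁ ∪ T₂).card - p ^ T₁.card * p ^ T₂.card := by
  unfold cov
  have : ∀ ω, (∏ l ∈ T₁, Y l ω) * (∏ l ∈ T₂, Y l ω) = ∏ l ∈ T₁ ∪ T₂, Y l ω :=
    PP h01 T₁ T₂
  simp only [this]
  rw [EP' μ hmeas h01 hindep hid hp0, EP' μ hmeas h01 hindep hid hp0,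
    EP' μ hmeas h01 hindep hid hp0]

include hmeas h01 hindep hid in
lemma covPnn' (hp0 : 0 ≤ p) (hp1 : p ≤ 1) (T₁ T₂ : Finset (Fin n)) :
    0 ≤ cov μ (fun ω => ∏ l ∈ T₁, Y l ω) (fun ω => ∏ l ∈ T₂, Y l ω) := by
  rw [covP' μ hmeas h01 hindep hid hp0, ← pow_add]
  have := pow_le_pow_of_le_one hp0 hp1 (Finset.card_union_le T₁ T₂)
  linarith

include hmeas h01 hindep hid in
lemma core' {ι : Type*} (hp0 : 0 ≤ p) (hp1 : p ≤ 1)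
    (T : ι → Finset (Fin n)) (A : Finset ι) (Tj : Finset (Fin n))
    {l0 : ℝ} (hl00 : 0 ≤ l0) (hl01 : l0 ≤ 1) :
    -l0 * ∑ i ∈ A, cov μ (fun ω => ∏ l ∈ T i, Y l ω) (fun ω => ∏ l ∈ Tj, Y l ω)
      ≤ cov μ (fun ω => ∏ i ∈ A, (1 - l0 * ∏ l ∈ T i, Y l ω))
          (fun ω => ∏ l ∈ Tj, Y l ω) := by
  classical
  have hY0 : ∀ i ω, 0 ≤ Y i ω := fun i ω => by rcases h01 i ω with h|h <;> rw [h] <;> norm_num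
  have hY1 : ∀ i ω, Y i ω ≤ 1 := fun i ω => by rcases h01 i ω with h|h <;> rw [h] <;> norm_num
  have hQ0 : ∀ (B : Finset (Fin n)) ω, 0 ≤ ∏ l ∈ B, Y l ω := fun B ω =>
    Finset.prod_nonneg fun l _ => hY0 l ω
  have hQ1 : ∀ (B : Finset (Fin n)) ω, ∏ l ∈ B, Y l ω ≤ 1 := fun B ω =>
    Finset.prod_le_one (fun l _ => hY0 l ω) (fun l _ => hY1 l ω)
  have hQm : ∀ (B : Finset (Fin n)), Measurable (fun ω => ∏ l ∈ B, Y l ω) := fun B =>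
    Finset.measurable_prod B fun l _ => hmeas l
  set Z : Ω → ℝ := fun ω => ∏ l ∈ Tj, Y l ω with hZdef
  set W : Ω → ℝ := fun ω => ∏ i ∈ A, (1 - l0 * ∏ l ∈ T i, Y l ω) with hWdef
  set W' : Ω → ℝ := fun ω => ∏ i ∈ A, (1 - l0 * ∏ l ∈ T i \ Tj, Y l ω) with hW'def
  have hf0 : ∀ (B : Finset (Fin n)) ω, 0 ≤ 1 - l0 * ∏ l ∈ B, Y l ω := fun B ω => by
    nlinarith [hQ0 B ω, hQ1 B ω]
  have hf1 : ∀ (B : Finset (Fin n)) ω, 1 - l0 * ∏ l ∈ B, Y l ω ≤ 1 := fun B ω => by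
    nlinarith [hQ0 B ω]
  have hW0 : ∀ ω, 0 ≤ W ω := fun ω => Finset.prod_nonneg fun i _ => hf0 _ ω
  have hW1 : ∀ ω, W ω ≤ 1 :=
    fun ω => Finset.prod_le_one (fun i _ => hf0 _ ω) (fun i _ => hf1 _ ω)
  have hW'0 : ∀ ω, 0 ≤ W' ω := fun ω => Finset.prod_nonneg fun i _ => hf0 _ ω
  have hW'1 : ∀ ω, W' ω ≤ 1 :=
    fun ω => Finset.prod_le_one (fun i _ => hf0 _ ω) (fun i _ => hf1 _ ω)
  have hWm : Measurable W := Finset.measurable_prod A fun i _ =>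
    measurable_const.sub ((hQm (T i)).const_mul l0)
  have hW'm : Measurable W' := Finset.measurable_prod A fun i _ =>
    measurable_const.sub ((hQm (T i \ Tj)).const_mul l0)
  -- (iv) W * Z = W' * Z pointwise
  have hWZ : ∀ ω, W ω * Z ω = W' ω * Z ω := by
    intro ω
    by_cases hz : Z ω = 0
    · rw [hz, mul_zero, mul_zero]
    · have hone : ∀ l ∈ Tj, Y l ω = 1 := by
        intro l hl
        rcases h01 l ω with h | h
        · exact absurd (Finset.prod_eq_zero hl h) hz
        · exact h
      have hQeq : ∀ i : ι, ∏ l ∈ T i, Y l ω = ∏ l ∈ T i \ Tj, Y l ω := by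
        intro i
        rw [← Finset.prod_inter_mul_prod_diff (T i) Tj (fun l => Y l ω),
          Finset.prod_eq_one (fun l hl => hone l (Finset.mem_inter.1 hl).2), one_mul]
      have : W ω = W' ω := Finset.prod_congr rfl fun i _ => by rw [hQeq i]
      rw [this]
  -- (v) independence of W' and Z
  have hindWZ : IndepFun W' Z μ := by
    have hIF := hindep.indepFun_finset Tjᶜ Tj disjoint_compl_left hmeas
    set F : (↥(Tjᶜ : Finset (Fin n)) → ℝ) → ℝ := fun v => ∏ i ∈ A,
      (1 - l0 * ∏ x ∈ Finset.univ.filter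
        (fun x : ↥(Tjᶜ : Finset (Fin n)) => (x : Fin n) ∈ T i), v x) with hFdef
    set G : (↥Tj → ℝ) → ℝ := fun v => ∏ x, v x with hGdef
    have hF : Measurable F := Finset.measurable_prod A fun i _ =>
      measurable_const.sub ((Finset.measurable_prod _ fun x _ =>
        measurable_pi_apply x).const_mul l0)
    have hG : Measurable G := Finset.measurable_prod _ fun x _ => measurable_pi_apply x
    have hcomp := hIF.comp hF hG
    have hFeq : (fun a => F (fun i : ↥(Tjᶜ : Finset (Fin n)) => Y i a)) = W' := by
      funext a
      refine Finset.prod_congr rfl fun i _ => ?_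
      congr 1
      congr 1
      refine Finset.prod_bij (fun x _ => (x : Fin n)) ?_ ?_ ?_ ?_
      · intro x hx
        simp only [Finset.mem_filter, Finset.mem_univ, true_and] at hx
        exact Finset.mem_sdiff.2 ⟨hx, Finset.mem_compl.1 x.2⟩
      · intro x₁ _ x₂ _ h
        exact Subtype.ext h
      · intro l hl
        obtain ⟨hlT, hlTj⟩ := Finset.mem_sdiff.1 hl
        exact ⟨⟨l, Finset.mem_compl.2 hlTj⟩,
          Finset.mem_filter.2 ⟨Finset.mem_univ _, hlT⟩, rfl⟩
      · intro x _; rfl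
    have hGeq : (fun a => G (fun i : ↥Tj => Y i a)) = Z := by
      funext a
      exact Finset.prod_coe_sort Tj (fun l => Y l a)
    simp only [Function.comp_def] at hcomp
    rw [hFeq, hGeq] at hcomp
    exact hcomp
  -- expectations
  have hEZ : ∫ ω, Z ω ∂μ = p ^ Tj.card := EP' μ hmeas h01 hindep hid hp0 Tj
  have hEZ0 : 0 ≤ ∫ ω, Z ω ∂μ := by rw [hEZ]; positivity
  -- (vi) E[W' Z] = E[W'] E[Z]
  have hfact : ∫ ω, W' ω * Z ω ∂μ = (∫ ω, W' ω ∂μ) * ∫ ω, Z ω ∂μ := by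
    have := hindWZ.integral_mul_eq_mul_integral hW'm.aestronglyMeasurable (hQm Tj).aestronglyMeasurable
    simpa using this
  -- (vii)
  have habsW : ∀ ω, |W ω| ≤ 1 := fun ω => abs_le.2 ⟨by linarith [hW0 ω], hW1 ω⟩
  have habsW' : ∀ ω, |W' ω| ≤ 1 := fun ω => abs_le.2 ⟨by linarith [hW'0 ω], hW'1 ω⟩
  have hWi : Integrable W μ := bdd_int' μ hWm habsW
  have hW'i : Integrable W' μ := bdd_int' μ hW'm habsW'
  have hQi : ∀ (B : Finset (Fin n)), Integrable (fun ω => ∏ l ∈ B, Y l ω) μ := fun B =>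
    bdd_int' μ (hQm B) (fun ω => abs_le.2 ⟨by linarith [hQ0 B ω], hQ1 B ω⟩)
  have hintsummand : ∀ i : ι, ∫ ω, ((1 - l0 * ∏ l ∈ T i, Y l ω) - (1 - l0 * ∏ l ∈ T i \ Tj, Y l ω)) ∂μ
      = l0 * ((∫ ω, ∏ l ∈ T i \ Tj, Y l ω ∂μ) - ∫ ω, ∏ l ∈ T i, Y l ω ∂μ) := by
    intro i
    have heq : (fun ω => (1 - l0 * ∏ l ∈ T i, Y l ω) - (1 - l0 * ∏ l ∈ T i \ Tj, Y l ω))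
        = fun ω => l0 * ((∏ l ∈ T i \ Tj, Y l ω) - ∏ l ∈ T i, Y l ω) := by
      funext ω; ring
    rw [heq, MeasureTheory.integral_const_mul, integral_sub (hQi _) (hQi _)]
  have hsummandint : ∀ i : ι, Integrable
      (fun ω => (1 - l0 * ∏ l ∈ T i, Y l ω) - (1 - l0 * ∏ l ∈ T i \ Tj, Y l ω)) μ := by
    intro i
    have heq : (fun ω => (1 - l0 * ∏ l ∈ T i, Y l ω) - (1 - l0 * ∏ l ∈ T i \ Tj, Y l ω))
        = fun ω => l0 * ((∏ l ∈ T i \ Tj, Y l ω) - ∏ l ∈ T i, Y l ω) := by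
      funext ω; ring
    rw [heq]
    exact (((hQi _).sub (hQi _)).const_mul l0)
  have hdiff : ∫ ω, W ω ∂μ - ∫ ω, W' ω ∂μ
      ≤ l0 * ∑ i ∈ A, ((∫ ω, ∏ l ∈ T i \ Tj, Y l ω ∂μ) - ∫ ω, ∏ l ∈ T i, Y l ω ∂μ) := by
    have hpt : ∀ ω, (∏ i ∈ A, (1 - l0 * ∏ l ∈ T i, Y l ω))
        - (∏ i ∈ A, (1 - l0 * ∏ l ∈ T i \ Tj, Y l ω)) ≤
        ∑ i ∈ A, ((1 - l0 * ∏ l ∈ T i, Y l ω) - (1 - l0 * ∏ l ∈ T i \ Tj, Y l ω)) := by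
      intro ω
      refine prod_sub_prod_le A _ _ (fun i _ => hf0 _ ω) (fun i _ => ?_) (fun i _ => hf1 _ ω)
      have : ∏ l ∈ T i, Y l ω ≤ ∏ l ∈ T i \ Tj, Y l ω := by
        rw [← Finset.prod_inter_mul_prod_diff (T i) Tj (fun l => Y l ω)]
        nlinarith [hQ0 (T i ∩ Tj) ω, hQ1 (T i ∩ Tj) ω, hQ0 (T i \ Tj) ω]
      nlinarith
    have hint : ∫ ω, (W ω - W' ω) ∂μ ≤ ∫ ω, ∑ i ∈ A,
        ((1 - l0 * ∏ l ∈ T i, Y l ω) - (1 - l0 * ∏ l ∈ T i \ Tj, Y l ω)) ∂μ := by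
      exact integral_mono (hWi.sub hW'i)
        (integrable_finset_sum A fun i _ => hsummandint i) hpt
    rw [integral_sub hWi hW'i] at hint
    rw [integral_finset_sum A (fun i _ => hsummandint i)] at hint
    calc ∫ ω, W ω ∂μ - ∫ ω, W' ω ∂μ ≤ _ := hint
      _ = _ := by
        rw [Finset.mul_sum]
        exact Finset.sum_congr rfl fun i _ => hintsummand i
  -- (viii) conclude
  have hcovW : cov μ W Z = ((∫ ω, W' ω ∂μ) - ∫ ω, W ω ∂μ) * ∫ ω, Z ω ∂μ := by
    unfold cov
    have h1 : ∫ ω, W ω * Z ω ∂μ = ∫ ω, W' ω * Z ω ∂μ := by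
      congr 1; funext ω; exact hWZ ω
    rw [h1, hfact]; ring
  have hcovform : ∀ i : ι,
      cov μ (fun ω => ∏ l ∈ T i, Y l ω) Z
        = ((∫ ω, ∏ l ∈ T i \ Tj, Y l ω ∂μ) - ∫ ω, ∏ l ∈ T i, Y l ω ∂μ) * ∫ ω, Z ω ∂μ := by
    intro i
    rw [hZdef]
    rw [covP' μ hmeas h01 hindep hid hp0, EP' μ hmeas h01 hindep hid hp0,
      EP' μ hmeas h01 hindep hid hp0, EP' μ hmeas h01 hindep hid hp0]
    rw [← Finset.card_sdiff_add_card (T i) Tj, pow_add]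
    ring
  rw [hcovW]
  calc -l0 * ∑ i ∈ A, cov μ (fun ω => ∏ l ∈ T i, Y l ω) Z
      = -(l0 * ∑ i ∈ A, ((∫ ω, ∏ l ∈ T i \ Tj, Y l ω ∂μ) - ∫ ω, ∏ l ∈ T i, Y l ω ∂μ))
          * ∫ ω, Z ω ∂μ := by
        simp only [hcovform]
        rw [← Finset.sum_mul]
        ring
    _ ≤ ((∫ ω, W' ω ∂μ) - ∫ ω, W ω ∂μ) * ∫ ω, Z ω ∂μ := by
        refine mul_le_mul_of_nonneg_right ?_ hEZ0
        linarith [hdiff]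
include hmeas h01 hindep hid in
lemma count_bound' {k : ℕ} (hk : 2 ≤ k) (hn : k ≤ n) (hp0 : 0 ≤ p) (hp1 : p ≤ 1)
    (j : {S : Finset (Fin n) // S.card = k}) :
    ∑ i ∈ Finset.univ.erase j,
        cov μ (fun ω => ∏ l ∈ i.1, Y l ω) (fun ω => ∏ l ∈ j.1, Y l ω)
      ≤ ∑ m ∈ Finset.Icc 1 (k - 1),
          (k.choose m : ℝ) * ((n - k).choose (k - m) : ℝ)
            * (p ^ (2 * k - m) - p ^ (2 * k)) := by
  classical
  set φ : ℕ → ℝ := fun m => p ^ (2 * k - m) - p ^ (2 * k) with hφ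
  have hφ0 : ∀ m, m ≤ k → 0 ≤ φ m := by
    intro m hm
    have : p ^ (2 * k) ≤ p ^ (2 * k - m) := pow_le_pow_of_le_one hp0 hp1 (by omega)
    simp only [hφ]; linarith
  -- the value of the covariance for each i
  have hval : ∀ i : {S : Finset (Fin n) // S.card = k},
      cov μ (fun ω => ∏ l ∈ i.1, Y l ω) (fun ω => ∏ l ∈ j.1, Y l ω)
        = φ ((i.1 ∩ j.1).card) := by
    intro i
    rw [covP' μ hmeas h01 hindep hid hp0, i.2, j.2, ← pow_add]
    have hcard : (i.1 ∪ j.1).card = 2 * k - (i.1 ∩ j.1).card := by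
      have := Finset.card_union_add_card_inter i.1 j.1
      rw [i.2, j.2] at this; omega
    rw [hcard]
    have : k + k = 2 * k := by ring
    rw [this]
  -- the intersection number is at most k - 1 on the erased set
  have hmlt : ∀ i ∈ Finset.univ.erase j, (i.1 ∩ j.1).card ∈ Finset.Icc 0 (k - 1) := by
    intro i hi
    simp only [Finset.mem_Icc]
    refine ⟨Nat.zero_le _, ?_⟩
    by_contra hcon
    have hge : (i.1 ∩ j.1).card = k := by
      have hle : (i.1 ∩ j.1).card ≤ k := by
        calc (i.1 ∩ j.1).card ≤ i.1.card := Finset.card_le_card Finset.inter_subset_left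
          _ = k := i.2
      omega
    have : i.1 ∩ j.1 = i.1 :=
      Finset.eq_of_subset_of_card_le Finset.inter_subset_left (by rw [hge, i.2])
    have hsub : i.1 ⊆ j.1 := by rw [← this]; exact Finset.inter_subset_right
    have : i.1 = j.1 := Finset.eq_of_subset_of_card_le hsub (by rw [i.2, j.2])
    exact (Finset.mem_erase.1 hi).1 (Subtype.ext this)
  simp only [hval]
  rw [← Finset.sum_fiberwise_of_maps_to hmlt]
  -- split off the m = 0 term
  have hsplit : Finset.Icc 0 (k - 1) = insert 0 (Finset.Icc 1 (k - 1)) := by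
    ext m; simp only [Finset.mem_Icc, Finset.mem_insert]; omega
  rw [hsplit, Finset.sum_insert (by simp)]
  have hzero : ∑ i ∈ (Finset.univ.erase j).filter (fun i => (i.1 ∩ j.1).card = 0),
      φ ((i.1 ∩ j.1).card) = 0 := by
    refine Finset.sum_eq_zero fun i hi => ?_
    rw [(Finset.mem_filter.1 hi).2]
    simp [hφ]
  rw [hzero, zero_add]
  refine Finset.sum_le_sum fun m hm => ?_
  have hm1 : 1 ≤ m := (Finset.mem_Icc.1 hm).1
  have hmk : m ≤ k - 1 := (Finset.mem_Icc.1 hm).2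
  have hmk' : m ≤ k := by omega
  have hconst : ∑ i ∈ (Finset.univ.erase j).filter (fun i => (i.1 ∩ j.1).card = m),
      φ ((i.1 ∩ j.1).card)
      = ((Finset.univ.erase j).filter (fun i => (i.1 ∩ j.1).card = m)).card * φ m := by
    rw [Finset.sum_congr rfl (fun i hi => by rw [(Finset.mem_filter.1 hi).2])]
    rw [Finset.sum_const, nsmul_eq_mul]
  rw [hconst]
  have hcardle : (((Finset.univ.erase j).filter
      (fun i => (i.1 ∩ j.1).card = m)).card : ℝ)
      ≤ (k.choose m : ℝ) * ((n - k).choose (k - m) : ℝ) := by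
    have key : ((Finset.univ.erase j).filter (fun i => (i.1 ∩ j.1).card = m)).card
        ≤ ((j.1.powersetCard m) ×ˢ ((j.1ᶜ).powersetCard (k - m))).card := by
      refine Finset.card_le_card_of_injOn
        (fun i => (i.1 ∩ j.1, i.1 \ j.1)) ?_ ?_
      · intro i hi
        obtain ⟨-, hm'⟩ := Finset.mem_filter.1 hi
        refine Finset.mem_product.2 ⟨?_, ?_⟩
        · exact Finset.mem_powersetCard.2 ⟨Finset.inter_subset_right, hm'⟩
        · refine Finset.mem_powersetCard.2 ⟨?_, ?_⟩
          · intro x hx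
            exact Finset.mem_compl.2 (Finset.mem_sdiff.1 hx).2
          · show (i.1 \ j.1).card = k - m
            have := Finset.card_inter_add_card_sdiff i.1 j.1
            rw [i.2, hm'] at this
            omega
      · intro i1 h1 i2 h2 heq
        have h1' : i1.1 = (i1.1 ∩ j.1) ∪ (i1.1 \ j.1) := by
          ext a
          simp only [Finset.mem_union, Finset.mem_inter, Finset.mem_sdiff]
          tauto
        have h2' : i2.1 = (i2.1 ∩ j.1) ∪ (i2.1 \ j.1) := by
          ext a
          simp only [Finset.mem_union, Finset.mem_inter, Finset.mem_sdiff]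
          tauto
        have e1 : i1.1 ∩ j.1 = i2.1 ∩ j.1 := congrArg Prod.fst heq
        have e2 : i1.1 \ j.1 = i2.1 \ j.1 := congrArg Prod.snd heq
        apply Subtype.ext
        rw [h1', h2', e1, e2]
    have hcards : ((j.1.powersetCard m) ×ˢ ((j.1ᶜ).powersetCard (k - m))).card
        = k.choose m * (n - k).choose (k - m) := by
      rw [Finset.card_product, Finset.card_powersetCard, Finset.card_powersetCard,
        j.2, Finset.card_compl, Fintype.card_fin, j.2]
    rw [hcards] at key
    calc (((Finset.univ.erase j).filter (fun i => (i.1 ∩ j.1).card = m)).card : ℝ)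
        ≤ ((k.choose m * (n - k).choose (k - m) : ℕ) : ℝ) := Nat.cast_le.2 key
      _ = _ := by push_cast; ring
  calc (((Finset.univ.erase j).filter (fun i => (i.1 ∩ j.1).card = m)).card : ℝ) * φ m
      ≤ (k.choose m : ℝ) * ((n - k).choose (k - m) : ℝ) * φ m :=
        mul_le_mul_of_nonneg_right hcardle (hφ0 m hmk')
    _ = _ := by rw [hφ]
end facts

theorem stmt12 {Ω : Type*} [MeasurableSpace Ω] (μ : Measure Ω) [IsProbabilityMeasure μ]
    {n k : ℕ} (hk : 2 ≤ k) (hn : k ≤ n)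
    (p : ℝ) (hp0 : 0 < p) (hp1 : p < 1)
    (Y : Fin n → Ω → ℝ)
    (hmeas : ∀ i, Measurable (Y i))
    (h01 : ∀ i ω, Y i ω = 0 ∨ Y i ω = 1)
    (hindep : iIndepFun Y μ)
    (hid : ∀ i, μ {ω | Y i ω = 1} = ENNReal.ofReal p)
    (Z : {S : Finset (Fin n) // S.card = k} → Ω → ℝ)
    (hZ : ∀ S ω, Z S ω = ∏ i ∈ S.val, Y i ω)
    (t : ℝ) (ht : 0 < t) :
    (μ {ω | ∑ S, Z S ω = 0}).toReal ≤
      (1 - p ^ k) ^ n.choose k *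
        (1 + Real.exp (-t) * (p ^ k / (1 - p ^ k))) ^ n.choose k +
      t ^ 2 / 2 * (n.choose k) *
        ∑ m ∈ Finset.Icc 1 (k - 1),
          (k.choose m : ℝ) * ((n - k).choose (k - m) : ℝ) *
            (p ^ (2 * k - m) - p ^ (2 * k)) := by
  classical
  have hp0' : (0:ℝ) ≤ p := hp0.le
  have hp1' : p ≤ 1 := hp1.le
  have hcardι : Fintype.card {S : Finset (Fin n) // S.card = k} = n.choose k := by
    rw [Fintype.card_finset_len, Fintype.card_fin]
  set e : {S : Finset (Fin n) // S.card = k} ≃ Fin (n.choose k) :=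
    (Fintype.equivFin _).trans (finCongr hcardι) with he
  -- basics about Y and products
  have hY0 : ∀ i ω, 0 ≤ Y i ω := fun i ω => by rcases h01 i ω with h|h <;> rw [h] <;> norm_num
  have hY1 : ∀ i ω, Y i ω ≤ 1 := fun i ω => by rcases h01 i ω with h|h <;> rw [h] <;> norm_num
  have hQ0 : ∀ (B : Finset (Fin n)) ω, 0 ≤ ∏ l ∈ B, Y l ω := fun B ω =>
    Finset.prod_nonneg fun l _ => hY0 l ω
  have hQ1 : ∀ (B : Finset (Fin n)) ω, ∏ l ∈ B, Y l ω ≤ 1 := fun B ω =>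
    Finset.prod_le_one (fun l _ => hY0 l ω) (fun l _ => hY1 l ω)
  have hQm : ∀ (B : Finset (Fin n)), Measurable (fun ω => ∏ l ∈ B, Y l ω) := fun B =>
    Finset.measurable_prod B fun l _ => hmeas l
  have hQi : ∀ (B : Finset (Fin n)), Integrable (fun ω => ∏ l ∈ B, Y l ω) μ := fun B =>
    bdd_int' μ (hQm B) (fun ω => abs_le.2 ⟨by linarith [hQ0 B ω], hQ1 B ω⟩)
  -- the damping parameter
  set l0 : ℝ := 1 - Real.exp (-t) with hl0
  have hexple : Real.exp (-t) ≤ 1 := by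
    rw [← Real.exp_zero]; exact Real.exp_le_exp.2 (by linarith)
  have hl00 : 0 ≤ l0 := by rw [hl0]; linarith
  have hl01 : l0 ≤ 1 := by rw [hl0]; have := Real.exp_pos (-t); linarith
  have hl0t : l0 ≤ t := by rw [hl0]; have := Real.add_one_le_exp (-t); linarith
  -- the factors
  have hf0 : ∀ (B : Finset (Fin n)) ω, 0 ≤ 1 - l0 * ∏ l ∈ B, Y l ω := fun B ω => by
    nlinarith [hQ0 B ω, hQ1 B ω]
  have hf1 : ∀ (B : Finset (Fin n)) ω, 1 - l0 * ∏ l ∈ B, Y l ω ≤ 1 := fun B ω => by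
    nlinarith [hQ0 B ω]
  set g : Fin (n.choose k) → Ω → ℝ := fun j ω => 1 - l0 * ∏ l ∈ (e.symm j).1, Y l ω with hg
  have hgm : ∀ j, Measurable (g j) := fun j =>
    measurable_const.sub ((hQm _).const_mul l0)
  have hg0 : ∀ j ω, 0 ≤ g j ω := fun j ω => hf0 _ ω
  have hg1 : ∀ j ω, g j ω ≤ 1 := fun j ω => hf1 _ ω
  -- step 1 : the measure is at most the expectation of the product
  have hsetmeas : MeasurableSet {ω | ∑ S, Z S ω = 0} := by
    have hm : Measurable (fun ω => ∑ S, Z S ω) := by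
      apply Finset.measurable_sum
      intro S _
      have : Z S = fun ω => ∏ l ∈ S.1, Y l ω := funext (hZ S)
      rw [this]; exact hQm S.1
    exact hm (measurableSet_singleton 0)
  have hprodmeas : Measurable (fun ω => ∏ j : Fin (n.choose k), g j ω) :=
    Finset.measurable_prod _ fun j _ => hgm j
  have hprodabs : ∀ ω, |∏ j : Fin (n.choose k), g j ω| ≤ 1 := fun ω => abs_le.2
    ⟨by linarith [Finset.prod_nonneg (fun j (_ : j ∈ Finset.univ) => hg0 j ω)],
     Finset.prod_le_one (fun j _ => hg0 j ω) (fun j _ => hg1 j ω)⟩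
  have hstep1 : (μ {ω | ∑ S, Z S ω = 0}).toReal
      ≤ ∫ ω, ∏ j : Fin (n.choose k), g j ω ∂μ := by
    have hind : (μ {ω | ∑ S, Z S ω = 0}).toReal
        = ∫ ω, Set.indicator {ω | ∑ S, Z S ω = 0} (fun _ => (1:ℝ)) ω ∂μ := by
      rw [integral_indicator_const (1:ℝ) hsetmeas, smul_eq_mul, mul_one, measureReal_def]
    rw [hind]
    refine integral_mono ((integrable_const (1:ℝ)).indicator hsetmeas)
      (bdd_int' μ hprodmeas hprodabs) ?_
    intro ω
    by_cases hω : ω ∈ {ω | ∑ S, Z S ω = 0}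
    · rw [Set.indicator_of_mem hω]
      have hz : ∀ S : {S : Finset (Fin n) // S.card = k}, Z S ω = 0 := by
        have hsum : ∑ S, Z S ω = 0 := hω
        have := (Finset.sum_eq_zero_iff_of_nonneg
          (fun S _ => by rw [hZ S ω]; exact hQ0 S.1 ω)).1 hsum
        exact fun S => this S (Finset.mem_univ S)
      have hone : ∀ j : Fin (n.choose k), g j ω = 1 := by
        intro j
        have h0 : ∏ l ∈ (e.symm j).1, Y l ω = 0 := by
          rw [← hZ (e.symm j) ω]; exact hz (e.symm j)
        rw [hg]; simp only [h0, mul_zero, sub_zero]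
      show (1:ℝ) ≤ ∏ j : Fin (n.choose k), g j ω
      rw [Finset.prod_eq_one (fun j _ => hone j)]
    · rw [Set.indicator_of_notMem hω]
      exact Finset.prod_nonneg fun j _ => hg0 j ω
  -- covariance of pairs
  set w : {S : Finset (Fin n) // S.card = k} → {S : Finset (Fin n) // S.card = k} → ℝ :=
    fun i j => cov μ (fun ω => ∏ l ∈ i.1, Y l ω) (fun ω => ∏ l ∈ j.1, Y l ω) with hw
  have hwnn : ∀ i j, 0 ≤ w i j := fun i j =>
    covPnn' μ hmeas h01 hindep hid hp0' hp1' _ _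
  have hwsym : ∀ i j, w i j = w j i := fun i j => cov_symm' μ _ _
  set C : Fin (n.choose k) → ℝ := fun j => l0 ^ 2 *
    ∑ i ∈ Finset.univ.filter (· < j), w (e.symm i) (e.symm j) with hC
  have hC0 : ∀ j, 0 ≤ C j := fun j => mul_nonneg (sq_nonneg l0)
    (Finset.sum_nonneg fun i _ => hwnn _ _)
  have hcovC : ∀ (j : Fin (n.choose k)) (A : Finset (Fin (n.choose k))),
      (∀ i ∈ A, i < j) → cov μ (fun ω => ∏ i ∈ A, g i ω) (g j) ≤ C j := by
    intro j A hA
    have hXm : Measurable (fun ω => ∏ i ∈ A, g i ω) :=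
      Finset.measurable_prod _ fun i _ => hgm i
    have hXb : ∀ ω, |∏ i ∈ A, g i ω| ≤ 1 := fun ω => abs_le.2
      ⟨by linarith [Finset.prod_nonneg (fun i (_ : i ∈ A) => hg0 i ω)],
       Finset.prod_le_one (fun i _ => hg0 i ω) (fun i _ => hg1 i ω)⟩
    have hVb : ∀ ω, |∏ l ∈ (e.symm j).1, Y l ω| ≤ 1 := fun ω => abs_le.2
      ⟨by linarith [hQ0 (e.symm j).1 ω], hQ1 (e.symm j).1 ω⟩
    have h1 : cov μ (fun ω => ∏ i ∈ A, g i ω) (g j)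
        = -l0 * cov μ (fun ω => ∏ i ∈ A, g i ω) (fun ω => ∏ l ∈ (e.symm j).1, Y l ω) := by
      have := cov_one_sub' μ hXm (hQm (e.symm j).1) hXb hVb l0
      rw [← this]
    have hcore := core' μ hmeas h01 hindep hid hp0' hp1'
      (fun i : Fin (n.choose k) => (e.symm i).1) A (e.symm j).1 hl00 hl01
    have h2 : -l0 * cov μ (fun ω => ∏ i ∈ A, g i ω) (fun ω => ∏ l ∈ (e.symm j).1, Y l ω)
        ≤ l0 ^ 2 * ∑ i ∈ A, w (e.symm i) (e.symm j) := by
      have h3 := mul_le_mul_of_nonpos_left hcore (neg_nonpos.2 hl00)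
      calc -l0 * cov μ (fun ω => ∏ i ∈ A, g i ω) (fun ω => ∏ l ∈ (e.symm j).1, Y l ω)
          ≤ -l0 * (-l0 * ∑ i ∈ A, w (e.symm i) (e.symm j)) := h3
        _ = l0 ^ 2 * ∑ i ∈ A, w (e.symm i) (e.symm j) := by ring
    have h4 : ∑ i ∈ A, w (e.symm i) (e.symm j)
        ≤ ∑ i ∈ Finset.univ.filter (· < j), w (e.symm i) (e.symm j) := by
      refine Finset.sum_le_sum_of_subset_of_nonneg ?_ (fun i _ _ => hwnn _ _)
      intro i hi
      exact Finset.mem_filter.2 ⟨Finset.mem_univ _, hA i hi⟩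
    rw [h1, hC]
    calc -l0 * cov μ (fun ω => ∏ i ∈ A, g i ω) (fun ω => ∏ l ∈ (e.symm j).1, Y l ω)
        ≤ l0 ^ 2 * ∑ i ∈ A, w (e.symm i) (e.symm j) := h2
      _ ≤ l0 ^ 2 * ∑ i ∈ Finset.univ.filter (· < j), w (e.symm i) (e.symm j) :=
          mul_le_mul_of_nonneg_left h4 (sq_nonneg l0)
  have htel := telescope' μ g hgm hg0 hg1 C hC0 hcovC Finset.univ
  -- expectations of the factors
  have hEg : ∀ j : Fin (n.choose k), ∫ ω, g j ω ∂μ = 1 - l0 * p ^ k := by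
    intro j
    rw [hg]
    rw [integral_sub (integrable_const 1) ((hQi (e.symm j).1).const_mul l0),
      integral_const, MeasureTheory.integral_const_mul,
      EP' μ hmeas h01 hindep hid hp0' (e.symm j).1, (e.symm j).2]
    simp
  have hprodE : ∏ j : Fin (n.choose k), (∫ ω, g j ω ∂μ) = (1 - l0 * p ^ k) ^ n.choose k := by
    rw [Finset.prod_congr rfl (fun j _ => hEg j), Finset.prod_const, Finset.card_univ,
      Fintype.card_fin]
  have hpk1 : p ^ k < 1 := pow_lt_one₀ hp0' hp1 (by omega)
  have hpk0 : 0 < p ^ k := pow_pos hp0 k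
  have hfirst : (1 - l0 * p ^ k) ^ n.choose k
      = (1 - p ^ k) ^ n.choose k
        * (1 + Real.exp (-t) * (p ^ k / (1 - p ^ k))) ^ n.choose k := by
    rw [← mul_pow]
    congr 1
    have hne : (1:ℝ) - p ^ k ≠ 0 := by linarith
    rw [hl0]
    field_simp
    ring
  -- sum of the C's
  set K : ℝ := ∑ m ∈ Finset.Icc 1 (k - 1),
    (k.choose m : ℝ) * ((n - k).choose (k - m) : ℝ) * (p ^ (2 * k - m) - p ^ (2 * k))
    with hK
  have hhalf : 2 * ∑ j : Fin (n.choose k),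
        ∑ i ∈ Finset.univ.filter (· < j), w (e.symm i) (e.symm j)
      = ∑ j : Fin (n.choose k), ∑ i ∈ Finset.univ.erase j, w (e.symm i) (e.symm j) := by
    simpa using half_sum' (fun i j : Fin (n.choose k) => w (e.symm i) (e.symm j))
      (fun i j => hwsym _ _)
  have hinner : ∀ j : Fin (n.choose k),
      ∑ i ∈ Finset.univ.erase j, w (e.symm i) (e.symm j) ≤ K := by
    intro j
    have himg : (Finset.univ.erase (e.symm j) :
          Finset {S : Finset (Fin n) // S.card = k})
        = (Finset.univ.erase j).image e.symm := by
      ext S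
      constructor
      · intro hS
        rw [Finset.mem_erase] at hS
        refine Finset.mem_image.2 ⟨e S, Finset.mem_erase.2 ⟨?_, Finset.mem_univ _⟩, by simp⟩
        intro hc
        exact hS.1 (by rw [← hc]; simp)
      · intro hS
        obtain ⟨i, hi, rfl⟩ := Finset.mem_image.1 hS
        rw [Finset.mem_erase] at hi ⊢
        exact ⟨fun hc => hi.1 (e.symm.injective hc), Finset.mem_univ _⟩
    have hsumeq : ∑ i ∈ Finset.univ.erase j, w (e.symm i) (e.symm j)
        = ∑ S ∈ Finset.univ.erase (e.symm j), w S (e.symm j) := by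
      rw [himg, Finset.sum_image (fun a _ b _ hab => e.symm.injective hab)]
    rw [hsumeq, hK, hw]
    exact count_bound' μ hmeas h01 hindep hid hk hn hp0' hp1' (e.symm j)
  have hsumC : ∑ j : Fin (n.choose k), C j ≤ t ^ 2 / 2 * (n.choose k) * K := by
    have hD : ∑ j : Fin (n.choose k), C j
        = l0 ^ 2 * ∑ j : Fin (n.choose k), ∑ i ∈ Finset.univ.filter (· < j),
            w (e.symm i) (e.symm j) := by
      rw [hC, Finset.mul_sum]
    have hD0 : 0 ≤ ∑ j : Fin (n.choose k), ∑ i ∈ Finset.univ.filter (· < j),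
        w (e.symm i) (e.symm j) :=
      Finset.sum_nonneg fun j _ => Finset.sum_nonneg fun i _ => hwnn _ _
    have hE_le : ∑ j : Fin (n.choose k), ∑ i ∈ Finset.univ.erase j, w (e.symm i) (e.symm j)
        ≤ (n.choose k) * K := by
      calc ∑ j : Fin (n.choose k), ∑ i ∈ Finset.univ.erase j, w (e.symm i) (e.symm j)
          ≤ ∑ _j : Fin (n.choose k), K := Finset.sum_le_sum fun j _ => hinner j
        _ = (n.choose k) * K := by
            rw [Finset.sum_const, Finset.card_univ, Fintype.card_fin, nsmul_eq_mul]
    have hl0sq : l0 ^ 2 ≤ t ^ 2 := pow_le_pow_left₀ hl00 hl0t 2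
    rw [hD]
    calc l0 ^ 2 * ∑ j : Fin (n.choose k), ∑ i ∈ Finset.univ.filter (· < j),
            w (e.symm i) (e.symm j)
        ≤ t ^ 2 * ∑ j : Fin (n.choose k), ∑ i ∈ Finset.univ.filter (· < j),
            w (e.symm i) (e.symm j) := mul_le_mul_of_nonneg_right hl0sq hD0
      _ = t ^ 2 / 2 * (2 * ∑ j : Fin (n.choose k), ∑ i ∈ Finset.univ.filter (· < j),
            w (e.symm i) (e.symm j)) := by ring
      _ = t ^ 2 / 2 * ∑ j : Fin (n.choose k), ∑ i ∈ Finset.univ.erase j,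
            w (e.symm i) (e.symm j) := by rw [hhalf]
      _ ≤ t ^ 2 / 2 * ((n.choose k) * K) :=
            mul_le_mul_of_nonneg_left hE_le (by positivity)
      _ = t ^ 2 / 2 * (n.choose k) * K := by ring
  calc (μ {ω | ∑ S, Z S ω = 0}).toReal
      ≤ ∫ ω, ∏ j : Fin (n.choose k), g j ω ∂μ := hstep1
    _ ≤ ∏ j : Fin (n.choose k), (∫ ω, g j ω ∂μ) + ∑ j : Fin (n.choose k), C j := htel
    _ ≤ (1 - p ^ k) ^ n.choose k * (1 + Real.exp (-t) * (p ^ k / (1 - p ^ k))) ^ n.choose k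
          + t ^ 2 / 2 * (n.choose k) * K := by
        rw [hprodE, hfirst]
        linarith [hsumC]
    _ = _ := by rw [hK]
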